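/- The map φ sending a game automorphism f of G_FL to the restriction of the induced map f̄ to c₀₀ is a group isomorphism from the automorphism group of G_FL (under composition) onto the group of bijective self-isometries of the metric space (c₀₀, d). -/

import Mathlib

/-!
Every finite sequence `t` is the prefix of the eventually-zero run `t⌢0^ω`, so a chronological
self-map `f` of `ω^{<ω}` is determined by `f̄` on `c₀₀`. The closed `d`-ball of radius `1/(n+1)`
around a run is the set of runs sharing its prefix of length `n`; hence `f̄` is an isometry as soon
as `f` is injective, and conversely a bijective isometry `h` of `c₀₀` determines the tree map
`t ↦ h(t⌢0^ω)↾|t|`, an automorphism of `G_FL` whose run map is `h` on `c₀₀`.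
-/

universe u v w x y

namespace FraisseGames

/-- The initial segment (of length `n`) of an infinite sequence `R`. -/
def runPrefix {M : Type u} (R : ℕ → M) (n : ℕ) : List M :=
  (List.range n).map R

/-- `T` is a game tree over `M`: it is closed under initial segments, and every
moment of `T` has a one-step extension in `T`. -/
def IsGameTree {M : Type u} (T : Set (List M)) : Prop :=
  (∀ t ∈ T, ∀ k : ℕ, t.take k ∈ T) ∧ ∀ t ∈ T, ∃ x : M, t ++ [x] ∈ T

/-- The set of runs of the tree `T`. -/
def Runs {M : Type u} (T : Set (List M)) : Set (ℕ → M) :=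
  {R | ∀ n : ℕ, runPrefix R n ∈ T}

/-- A game over `M`: a game tree together with a payoff set of runs. -/
structure Game (M : Type u) : Type u where
  tree : Set (List M)
  isGameTree : IsGameTree tree
  payoff : Set (ℕ → M)
  payoff_subset : payoff ⊆ Runs tree

/-- A game is finite if its set of runs is finite. -/
def Game.IsFin {M : Type u} (G : Game M) : Prop := (Runs G.tree).Finite

/-- The subgame relation `G ≤ G'`. -/
def Game.Sub {M : Type u} (G G' : Game M) : Prop :=
  G.tree ⊆ G'.tree ∧ G.payoff = G'.payoff ∩ Runs G.tree

/-- `f` is a chronological map from `T₁` to `T₂`: it maps `T₁` into `T₂` and it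
preserves lengths and truncations of moments. -/
def Chronological {M₁ : Type u} {M₂ : Type v} (T₁ : Set (List M₁)) (T₂ : Set (List M₂))
    (f : List M₁ → List M₂) : Prop :=
  (∀ t ∈ T₁, f t ∈ T₂) ∧ (∀ t ∈ T₁, (f t).length = t.length) ∧
    ∀ t ∈ T₁, ∀ k : ℕ, f (t.take k) = (f t).take k

/-- `BarMapsTo f R S` says that the map `f̄` on runs induced by the chronological
map `f` sends the run `R` to the run `S`, i.e. `S↾n = f (R↾n)` for all `n`. -/
def BarMapsTo {M₁ : Type u} {M₂ : Type v} (f : List M₁ → List M₂)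
    (R : ℕ → M₁) (S : ℕ → M₂) : Prop :=
  ∀ n : ℕ, runPrefix S n = f (runPrefix R n)

/-- `f` is an A-morphism from `G₁` to `G₂`: a chronological map whose induced map on
runs sends runs won by Ali to runs won by Ali. -/
def IsAMorphism {M₁ : Type u} {M₂ : Type v} (G₁ : Game M₁) (G₂ : Game M₂)
    (f : List M₁ → List M₂) : Prop :=
  Chronological G₁.tree G₂.tree f ∧
    ∀ R ∈ G₁.payoff, ∀ S : ℕ → M₂, BarMapsTo f R S → S ∈ G₂.payoff

/-- `f` is a game embedding from `G₁` to `G₂`: a chronological map, injective on the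
tree, such that for every run `R` of `G₁`, `R ∈ A₁ ↔ f̄ R ∈ A₂`. -/
def IsGameEmbedding {M₁ : Type u} {M₂ : Type v} (G₁ : Game M₁) (G₂ : Game M₂)
    (f : List M₁ → List M₂) : Prop :=
  Chronological G₁.tree G₂.tree f ∧
    (∀ t ∈ G₁.tree, ∀ s ∈ G₁.tree, f t = f s → t = s) ∧
    ∀ R ∈ Runs G₁.tree, ∀ S : ℕ → M₂, BarMapsTo f R S → (R ∈ G₁.payoff ↔ S ∈ G₂.payoff)

/-- `f` is an isomorphism of games from `G₁` onto `G₂`: a game embedding that is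
surjective onto the tree of `G₂`. -/
def IsGameIso {M₁ : Type u} {M₂ : Type v} (G₁ : Game M₁) (G₂ : Game M₂)
    (f : List M₁ → List M₂) : Prop :=
  IsGameEmbedding G₁ G₂ f ∧ ∀ s ∈ G₂.tree, ∃ t ∈ G₁.tree, f t = s

/-- The set of eventually-zero infinite sequences of natural numbers. -/
def c00 : Set (ℕ → ℕ) := {R | ∃ N : ℕ, ∀ n ≥ N, R n = 0}

/-- The game `G_FL = (ω^{<ω}, c₀₀)`. -/
def GFL : Game ℕ where
  tree := Set.univ
  isGameTree := ⟨fun _ _ _ => trivial, fun _ _ => ⟨0, trivial⟩⟩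
  payoff := c00
  payoff_subset := fun _ _ _ => trivial

/-- The map on runs induced by a (chronological) self-map of `ω^{<ω}`:
`runMapN f R` is the run `f̄(R)`, read off from the last entries of the images of
the finite prefixes of `R`. -/
def runMapN (f : List ℕ → List ℕ) (R : ℕ → ℕ) : ℕ → ℕ :=
  fun n => (f (runPrefix R (n + 1))).getD n 0

/-- The ultrametric `d` on `ℕ^ℕ`: `d(R,R') = 1/(Δ(R,R')+1)` for `R ≠ R'`. -/
noncomputable def ddist (R R' : ℕ → ℕ) : ℝ :=
  letI : Decidable (R = R') := Classical.dec _
  if h : R = R' then 0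
  else 1 / ((Nat.find (Function.ne_iff.mp h) + 1 : ℕ) : ℝ)

open Set Function

section RunPrefix

variable {M : Type u}

theorem runPrefix_length (R : ℕ → M) (n : ℕ) : (runPrefix R n).length = n := by
  simp [runPrefix]

theorem runPrefix_take (R : ℕ → M) (k n : ℕ) :
    (runPrefix R n).take k = runPrefix R (min k n) := by
  simp [runPrefix, ← List.map_take, List.take_range]

theorem runPrefix_eq_runPrefix_iff {R S : ℕ → M} {n : ℕ} :
    runPrefix R n = runPrefix S n ↔ ∀ m < n, R m = S m := by
  simp [runPrefix]

theorem eq_of_runPrefix_eq {R S : ℕ → M} (h : ∀ n, runPrefix R n = runPrefix S n) : R = S :=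
  funext fun m => runPrefix_eq_runPrefix_iff.mp (h (m + 1)) m m.lt_succ_self

end RunPrefix

section BarMapsTo

variable {M₁ : Type u} {M₂ : Type v} {f : List M₁ → List M₂}

theorem BarMapsTo.unique {R : ℕ → M₁} {S S' : ℕ → M₂} (h : BarMapsTo f R S)
    (h' : BarMapsTo f R S') : S = S' :=
  eq_of_runPrefix_eq fun n => (h n).trans (h' n).symm

theorem BarMapsTo.injective (hf : Injective f) {R R' : ℕ → M₁} {S : ℕ → M₂}
    (h : BarMapsTo f R S) (h' : BarMapsTo f R' S) : R = R' :=
  eq_of_runPrefix_eq fun n => hf ((h n).symm.trans (h' n))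

end BarMapsTo

section Chronological

variable {M₁ : Type u} {M₂ : Type v} {M₃ : Type w}

theorem Chronological.comp {T₁ : Set (List M₁)} {T₂ : Set (List M₂)} {T₃ : Set (List M₃)}
    {f : List M₂ → List M₃} {g : List M₁ → List M₂} (hf : Chronological T₂ T₃ f)
    (hg : Chronological T₁ T₂ g) : Chronological T₁ T₃ (f ∘ g) :=
  ⟨fun t ht => hf.1 _ (hg.1 t ht), fun t ht => (hf.2.1 _ (hg.1 t ht)).trans (hg.2.1 t ht),
    fun t ht k => by rw [comp_apply, hg.2.2 t ht, hf.2.2 _ (hg.1 t ht)]; rfl⟩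

theorem Chronological.of_rightInverse {f : List M₁ → List M₂} {g : List M₂ → List M₁}
    (hf : Chronological univ univ f) (hinj : Injective f) (hg : RightInverse g f) :
    Chronological univ univ g :=
  ⟨fun _ _ => trivial, fun t _ => by rw [← hf.2.1 _ trivial, hg t],
    fun t _ k => hinj (by rw [hg, hf.2.2 _ trivial, hg])⟩

end Chronological

section RunMap

variable {f g : List ℕ → List ℕ}

theorem barMapsTo_runMapN (hf : Chronological univ univ f) (R : ℕ → ℕ) :
    BarMapsTo f R (runMapN f R) := by
  intro n
  have hlen : ∀ m, (f (runPrefix R m)).length = m := fun m => by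
    rw [hf.2.1 _ trivial, runPrefix_length]
  refine List.ext_getElem (by rw [runPrefix_length, hlen]) fun i hi _ => ?_
  rw [runPrefix_length] at hi
  have hpre : runPrefix R (i + 1) = (runPrefix R n).take (i + 1) := by
    rw [runPrefix_take, min_eq_left hi]
  have hi' : i < (f (runPrefix R n)).length := by rw [hlen]; exact hi
  have hget : (runPrefix (runMapN f R) n)[i]'(by rwa [runPrefix_length]) = runMapN f R i := by
    simp [runPrefix]
  rw [hget, runMapN, hpre, hf.2.2 _ trivial]
  simp [List.getD_eq_getElem?_getD, hi']

theorem eq_runMapN_of_barMapsTo (hf : Chronological univ univ f) {R S : ℕ → ℕ}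
    (h : BarMapsTo f R S) : S = runMapN f R :=
  h.unique (barMapsTo_runMapN hf R)

theorem runMapN_id (R : ℕ → ℕ) : runMapN id R = R :=
  (eq_runMapN_of_barMapsTo ⟨fun _ _ => trivial, fun _ _ => rfl, fun _ _ _ => rfl⟩
    fun _ => rfl).symm

theorem runMapN_comp (hf : Chronological univ univ f) (hg : Chronological univ univ g)
    (R : ℕ → ℕ) : runMapN (f ∘ g) R = runMapN f (runMapN g R) :=
  (eq_runMapN_of_barMapsTo (hf.comp hg) fun n => by
    rw [barMapsTo_runMapN hf, barMapsTo_runMapN hg]; rfl).symm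

end RunMap

section EventuallyZero

/-- The run `t⌢0^ω`. -/
def extRun (t : List ℕ) : ℕ → ℕ := fun n => t.getD n 0

theorem extRun_mem_c00 (t : List ℕ) : extRun t ∈ c00 :=
  ⟨t.length, fun _ hn => List.getD_eq_default _ _ hn⟩

theorem runPrefix_extRun_length (t : List ℕ) : runPrefix (extRun t) t.length = t :=
  List.ext_getElem (runPrefix_length _ _) fun i _ hi => by simp [runPrefix, extRun, hi]

theorem exists_mem_c00_runPrefix_eq (t : List ℕ) : ∃ R ∈ c00, ∃ n, runPrefix R n = t :=
  ⟨extRun t, extRun_mem_c00 t, t.length, runPrefix_extRun_length t⟩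

theorem eq_of_forall_mem_c00_runMapN_eq {f g : List ℕ → List ℕ}
    (hf : Chronological univ univ f) (hg : Chronological univ univ g)
    (H : ∀ R ∈ c00, runMapN f R = runMapN g R) : f = g := by
  funext t
  obtain ⟨R, hR, n, rfl⟩ := exists_mem_c00_runPrefix_eq t
  rw [← barMapsTo_runMapN hf, ← barMapsTo_runMapN hg, H R hR]

end EventuallyZero

section Ultrametric

variable {x y u v : ℕ → ℕ}

theorem ddist_self (x : ℕ → ℕ) : ddist x x = 0 := dif_pos rfl

theorem ddist_of_ne (h : x ≠ y) :
    ddist x y = 1 / ((Nat.find (Function.ne_iff.mp h) + 1 : ℕ) : ℝ) := dif_neg h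

theorem runPrefix_eq_runPrefix_iff_le_find (h : x ≠ y) (n : ℕ) :
    runPrefix x n = runPrefix y n ↔ n ≤ Nat.find (Function.ne_iff.mp h) := by
  simp [runPrefix_eq_runPrefix_iff, Nat.le_find_iff]

theorem ddist_le_iff_runPrefix_eq {n : ℕ} :
    ddist x y ≤ 1 / ((n + 1 : ℕ) : ℝ) ↔ runPrefix x n = runPrefix y n := by
  by_cases h : x = y
  · subst h
    simp only [ddist_self, iff_true]
    positivity
  · rw [ddist_of_ne h, runPrefix_eq_runPrefix_iff_le_find h,
      one_div_le_one_div (by positivity) (by positivity)]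
    norm_cast
    omega

theorem ddist_le_ddist_of_forall_runPrefix_eq
    (H : ∀ n, runPrefix x n = runPrefix y n → runPrefix u n = runPrefix v n) :
    ddist u v ≤ ddist x y := by
  by_cases hxy : x = y
  · have huv : u = v := eq_of_runPrefix_eq fun n => H n (by rw [hxy])
    rw [hxy, huv, ddist_self, ddist_self]
  · rw [ddist_of_ne hxy]
    exact ddist_le_iff_runPrefix_eq.2 (H _ ((runPrefix_eq_runPrefix_iff_le_find hxy _).2 le_rfl))

theorem ddist_eq_ddist_iff :
    ddist x y = ddist u v ↔
      ∀ n, (runPrefix x n = runPrefix y n ↔ runPrefix u n = runPrefix v n) :=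
  ⟨fun h n => by rw [← ddist_le_iff_runPrefix_eq, ← ddist_le_iff_runPrefix_eq, h],
    fun H => le_antisymm (ddist_le_ddist_of_forall_runPrefix_eq fun n => (H n).2)
      (ddist_le_ddist_of_forall_runPrefix_eq fun n => (H n).1)⟩

end Ultrametric

section Automorphism

variable {f : List ℕ → List ℕ}

theorem IsGameIso.bijOn {M₁ : Type u} {M₂ : Type v} {G₁ : Game M₁} {G₂ : Game M₂}
    {f : List M₁ → List M₂} (hf : IsGameIso G₁ G₂ f) : BijOn f G₁.tree G₂.tree :=
  ⟨hf.1.1.1, fun t ht s hs => hf.1.2.1 t ht s hs, hf.2⟩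

theorem IsGameIso.bijective_of_GFL (hf : IsGameIso GFL GFL f) : Bijective f :=
  bijOn_univ.1 hf.bijOn

theorem runMapN_mem_c00_iff (hf : IsGameIso GFL GFL f) {R : ℕ → ℕ} :
    runMapN f R ∈ c00 ↔ R ∈ c00 :=
  (hf.1.2.2 R (fun _ => trivial) _ (barMapsTo_runMapN hf.1.1 R)).symm

/-- `f̄` is inverted by the run map of the inverse tree map, which is again chronological. -/
theorem bijOn_runMapN (hf : IsGameIso GFL GFL f) : BijOn (runMapN f) c00 c00 := by
  set g := surjInv hf.bijective_of_GFL.2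
  have hfg : RightInverse g f := rightInverse_surjInv _
  have hgf : LeftInverse g f := leftInverse_surjInv hf.bijective_of_GFL
  have hg : Chronological univ univ g := hf.1.1.of_rightInverse hf.bijective_of_GFL.1 hfg
  have hinv : InvOn (runMapN g) (runMapN f) c00 c00 :=
    ⟨fun R _ => by rw [← runMapN_comp hg hf.1.1, hgf.comp_eq_id, runMapN_id],
      fun S _ => by rw [← runMapN_comp hf.1.1 hg, hfg.comp_eq_id, runMapN_id]⟩
  refine hinv.bijOn (fun R hR => (runMapN_mem_c00_iff hf).2 hR) fun S hS => ?_
  rwa [← runMapN_mem_c00_iff hf, hinv.2 hS]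

theorem ddist_runMapN (hf : IsGameIso GFL GFL f) (x y : ℕ → ℕ) :
    ddist (runMapN f x) (runMapN f y) = ddist x y :=
  ddist_eq_ddist_iff.2 fun n => by
    rw [barMapsTo_runMapN hf.1.1, barMapsTo_runMapN hf.1.1]
    exact hf.bijective_of_GFL.1.eq_iff

end Automorphism

section Isometry

def IsIsometryOnC00 (h : (ℕ → ℕ) → ℕ → ℕ) : Prop :=
  ∀ x ∈ c00, ∀ y ∈ c00, ddist (h x) (h y) = ddist x y

def treeMapOfRunMap (h : (ℕ → ℕ) → ℕ → ℕ) (t : List ℕ) : List ℕ :=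
  runPrefix (h (extRun t)) t.length

variable {h : (ℕ → ℕ) → ℕ → ℕ}

theorem runPrefix_eq_runPrefix_iff_of_isometry (hiso : IsIsometryOnC00 h) {x y : ℕ → ℕ}
    (hx : x ∈ c00) (hy : y ∈ c00) (n : ℕ) :
    runPrefix (h x) n = runPrefix (h y) n ↔ runPrefix x n = runPrefix y n :=
  ddist_eq_ddist_iff.1 (hiso x hx y hy) n

theorem barMapsTo_treeMapOfRunMap (hiso : IsIsometryOnC00 h) {R : ℕ → ℕ} (hR : R ∈ c00) :
    BarMapsTo (treeMapOfRunMap h) R (h R) := by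
  intro n
  have hext : runPrefix (extRun (runPrefix R n)) n = runPrefix R n := by
    simpa only [runPrefix_length] using runPrefix_extRun_length (runPrefix R n)
  rw [treeMapOfRunMap, runPrefix_length, eq_comm,
    runPrefix_eq_runPrefix_iff_of_isometry hiso (extRun_mem_c00 _) hR, hext]

theorem chronological_treeMapOfRunMap (hiso : IsIsometryOnC00 h) :
    Chronological univ univ (treeMapOfRunMap h) := by
  refine ⟨fun _ _ => trivial, fun t _ => runPrefix_length _ _, fun t _ k => ?_⟩
  obtain ⟨R, hR, n, rfl⟩ := exists_mem_c00_runPrefix_eq t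
  rw [runPrefix_take, ← barMapsTo_treeMapOfRunMap hiso hR, ← barMapsTo_treeMapOfRunMap hiso hR,
    runPrefix_take]

theorem injective_treeMapOfRunMap (hiso : IsIsometryOnC00 h) : Injective (treeMapOfRunMap h) := by
  intro t s hts
  obtain ⟨R, hR, n, rfl⟩ := exists_mem_c00_runPrefix_eq t
  obtain ⟨S, hS, m, rfl⟩ := exists_mem_c00_runPrefix_eq s
  rw [← barMapsTo_treeMapOfRunMap hiso hR, ← barMapsTo_treeMapOfRunMap hiso hS] at hts
  obtain rfl : n = m := by simpa only [runPrefix_length] using congrArg List.length hts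
  exact (runPrefix_eq_runPrefix_iff_of_isometry hiso hR hS n).1 hts

theorem runMapN_treeMapOfRunMap (hiso : IsIsometryOnC00 h) {R : ℕ → ℕ} (hR : R ∈ c00) :
    runMapN (treeMapOfRunMap h) R = h R :=
  (eq_runMapN_of_barMapsTo (chronological_treeMapOfRunMap hiso)
    (barMapsTo_treeMapOfRunMap hiso hR)).symm

theorem isGameIso_treeMapOfRunMap (hiso : IsIsometryOnC00 h)
    (hmaps : MapsTo h c00 c00) (hsurj : SurjOn h c00 c00) :
    IsGameIso GFL GFL (treeMapOfRunMap h) := by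
  have hchron := chronological_treeMapOfRunMap hiso
  have hinj := injective_treeMapOfRunMap hiso
  refine ⟨⟨hchron, fun t _ s _ hts => hinj hts, fun R _ S hRS => ⟨fun hR => ?_, fun hS => ?_⟩⟩,
    fun s _ => ?_⟩
  · rw [eq_runMapN_of_barMapsTo hchron hRS, runMapN_treeMapOfRunMap hiso hR]
    exact hmaps hR
  · obtain ⟨x, hx, rfl⟩ := hsurj hS
    rwa [hRS.injective hinj (barMapsTo_treeMapOfRunMap hiso hx)]
  · obtain ⟨x, hx, hxs⟩ := hsurj (extRun_mem_c00 s)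
    refine ⟨runPrefix x s.length, trivial, ?_⟩
    rw [← barMapsTo_treeMapOfRunMap hiso hx, hxs, runPrefix_extRun_length]

end Isometry

/-- `f ↦ f̄↾c₀₀` is a group isomorphism from the automorphism group of
`G_FL` onto the group of bijective self-isometries of `(c₀₀, d)`:  it is
well-defined (sends automorphisms to bijective isometries of `c₀₀`), injective,
surjective, and it preserves composition. -/
theorem aut_GFL_iso_isometry_group_c00 :
    -- well-defined
    (∀ f : List ℕ → List ℕ, IsGameIso GFL GFL f →
      (∀ x ∈ c00, runMapN f x ∈ c00) ∧
      Set.BijOn (runMapN f) c00 c00 ∧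
      ∀ x ∈ c00, ∀ y ∈ c00, ddist (runMapN f x) (runMapN f y) = ddist x y) ∧
    -- injective
    (∀ f g : List ℕ → List ℕ, IsGameIso GFL GFL f → IsGameIso GFL GFL g →
      (∀ x ∈ c00, runMapN f x = runMapN g x) → f = g) ∧
    -- surjective
    (∀ h : (ℕ → ℕ) → ℕ → ℕ,
      Set.BijOn h c00 c00 →
      (∀ x ∈ c00, ∀ y ∈ c00, ddist (h x) (h y) = ddist x y) →
      ∃ f : List ℕ → List ℕ, IsGameIso GFL GFL f ∧ ∀ x ∈ c00, runMapN f x = h x) ∧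
    -- multiplicative: composition of automorphisms corresponds to composition
    ∀ f g : List ℕ → List ℕ, IsGameIso GFL GFL f → IsGameIso GFL GFL g →
      ∀ x ∈ c00, runMapN (f ∘ g) x = runMapN f (runMapN g x) :=
  ⟨fun _ hf => ⟨fun _ hx => (runMapN_mem_c00_iff hf).2 hx, bijOn_runMapN hf,
      fun x _ y _ => ddist_runMapN hf x y⟩,
    fun _ _ hf hg => eq_of_forall_mem_c00_runMapN_eq hf.1.1 hg.1.1,
    fun _ hbij hiso => ⟨_, isGameIso_treeMapOfRunMap hiso hbij.mapsTo hbij.surjOn,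
      fun _ hx => runMapN_treeMapOfRunMap hiso hx⟩,
    fun _ _ hf hg x _ => runMapN_comp hf.1.1 hg.1.1 x⟩

end FraisseGames
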